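/- Let Q₁, Q₂ ∈ {∃, ∀}, let x₁ and x₂ be distinct individual variables, let G₁[·] be a context in which x₂ does not occur free (reading the hole as empty), and let G₂ be a formula. Let F₀ = Q₁x₁. G₁[Q₂x₂. G₂]; let F₁ = Q₁x₁. G₁[G₂{x₂ ↦ εx₂. ¬^{Q₂} G₂}] (the result of rewriting the inner redex); and let F₂ = (G₁[Q₂x₂. G₂]){x₁ ↦ εx₁. ¬^{Q₁} G₁[Q₂x₂. G₂]} (the result of rewriting the outer, top-level redex). Then there exist formulas F₃ and F₄ such that: (1) F₁ → F₄, F₃ → F₄, and F₂ ⇉ F₃; (2) if x₂ occurs free in G₂ (the inner step is non-vacuous), then F₃ →₁ F₄ and F₂ ⇉₁ F₃ (all parallel steps non-vacuous); (3) if x₁ occurs free in G₁[Q₂x₂. G₂] (the outer step is non-vacuous), then F₁ →₁ F₄; (4) if x₁ does not occur free in G₁[Q₂x₂. G₂] (the outer step is vacuous), then F₃ = F₂. -/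

import Mathlib

/-!
Write `A = G₁[Q₂x₂. G₂]` and `A' = G₁[G₂{x₂ ↦ εx₂. ¬^{Q₂} G₂}]`, so that `A → A'` and
`F₁ = Q₁x₁. A'`. Take for `F₄` the contraction `A'{x₁ ↦ εx₁. ¬^{Q₁} A'}` of `F₁`, and
`F₃ = A{x₁ ↦ εx₁. ¬^{Q₁} A'}`. Then `F₃ → F₄` is the step `A → A'` under a substitution, and
`F₂ ⇉ F₃` rewrites the inner redex inside every copy of the substituted ε-term
`εx₁. ¬^{Q₁} A` at once. Rewriting does not change free variables, and substitution keeps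
a bound variable free, so non-vacuous steps stay non-vacuous; if `x₁` is not free in `A`,
both instantiations of `A` coincide.
-/

mutual
  /-- Terms of first-order logic extended with Hilbert's ε-operator,
  in de Bruijn representation (so formulas are automatically identified up
  to renaming of bound variables). -/
  inductive Tm : Type
    | var : ℕ → Tm
    | fn : ℕ → (k : ℕ) → (Fin k → Tm) → Tm
    | eps : Fm → Tm
  /-- Formulas; `ex F`, `all F` and `Tm.eps F` bind de Bruijn index 0 of `F`. -/
  inductive Fm : Type
    | pred : ℕ → (k : ℕ) → (Fin k → Tm) → Fm
    | not : Fm → Fm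
    | or : Fm → Fm → Fm
    | and : Fm → Fm → Fm
    | imp : Fm → Fm → Fm
    | ex : Fm → Fm
    | all : Fm → Fm
end

/-- Lifting a renaming under a binder. -/
def upRen (r : ℕ → ℕ) : ℕ → ℕ
  | 0 => 0
  | n + 1 => r n + 1

mutual
  /-- Renaming of free variables in a term. -/
  def renT (r : ℕ → ℕ) : Tm → Tm
    | .var i => .var (r i)
    | .fn f k a => .fn f k (fun i => renT r (a i))
    | .eps F => .eps (renF (upRen r) F)
  /-- Renaming of free variables in a formula. -/
  def renF (r : ℕ → ℕ) : Fm → Fm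
    | .pred p k a => .pred p k (fun i => renT r (a i))
    | .not F => .not (renF r F)
    | .or F G => .or (renF r F) (renF r G)
    | .and F G => .and (renF r F) (renF r G)
    | .imp F G => .imp (renF r F) (renF r G)
    | .ex F => .ex (renF (upRen r) F)
    | .all F => .all (renF (upRen r) F)
end

/-- Lifting a substitution under a binder. -/
def upSub (σ : ℕ → Tm) : ℕ → Tm
  | 0 => .var 0
  | n + 1 => renT Nat.succ (σ n)

mutual
  /-- Capture-avoiding simultaneous substitution on terms. -/
  def subT (σ : ℕ → Tm) : Tm → Tm
    | .var i => σ i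
    | .fn f k a => .fn f k (fun i => subT σ (a i))
    | .eps F => .eps (subF (upSub σ) F)
  /-- Capture-avoiding simultaneous substitution on formulas. -/
  def subF (σ : ℕ → Tm) : Fm → Fm
    | .pred p k a => .pred p k (fun i => subT σ (a i))
    | .not F => .not (subF σ F)
    | .or F G => .or (subF σ F) (subF σ G)
    | .and F G => .and (subF σ F) (subF σ G)
    | .imp F G => .imp (subF σ F) (subF σ G)
    | .ex F => .ex (subF (upSub σ) F)
    | .all F => .all (subF (upSub σ) F)
end

/-- `inst1 F t` is `F{x ↦ t}` for the variable `x` bound just outside `F`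
(de Bruijn index 0). -/
def inst1 (F : Fm) (t : Tm) : Fm :=
  subF (fun n => match n with | 0 => t | n + 1 => .var n) F

mutual
  /-- The variable with de Bruijn index `n` occurs free in the term. -/
  def freeT (n : ℕ) : Tm → Prop
    | .var i => i = n
    | .fn _ _ a => ∃ i, freeT n (a i)
    | .eps F => freeF (n + 1) F
  /-- The variable with de Bruijn index `n` occurs free in the formula. -/
  def freeF (n : ℕ) : Fm → Prop
    | .pred _ _ a => ∃ i, freeT n (a i)
    | .not F => freeF n F
    | .or F G => freeF n F ∨ freeF n G
    | .and F G => freeF n F ∨ freeF n G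
    | .imp F G => freeF n F ∨ freeF n G
    | .ex F => freeF (n + 1) F
    | .all F => freeF (n + 1) F
end

mutual
  /-- Number of occurrences of quantifiers (∃ and ∀, but not ε) in a term. -/
  def qcT : Tm → ℕ
    | .var _ => 0
    | .fn _ _ a => ∑ i, qcT (a i)
    | .eps F => qcF F
  /-- Number of occurrences of quantifiers (∃ and ∀, but not ε) in a formula. -/
  def qcF : Fm → ℕ
    | .pred _ _ a => ∑ i, qcT (a i)
    | .not F => qcF F
    | .or F G => qcF F + qcF G
    | .and F G => qcF F + qcF G
    | .imp F G => qcF F + qcF G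
    | .ex F => qcF F + 1
    | .all F => qcF F + 1
end

/-- Quantifier symbols. -/
inductive Quant : Type
  | ex
  | all

/-- `mkQ Q A` is the quantified formula `Qx. A`. -/
def mkQ : Quant → Fm → Fm
  | .ex, A => .ex A
  | .all, A => .all A

/-- `negQ Q A` is `¬^Q A`: `¬A` for `Q = ∀` and `A` for `Q = ∃`. -/
def negQ : Quant → Fm → Fm
  | .ex, A => A
  | .all, A => .not A

/-- `qeRedex Q A` is `A{x ↦ εx. ¬^Q A}`, the contractum of the redex `Qx. A`. -/
def qeRedex (Q : Quant) (A : Fm) : Fm := inst1 A (.eps (negQ Q A))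

mutual
  /-- One rewrite step inside a term, where each rewritten quantified subformula
  `Qx. A` is required to satisfy the side condition `P A`. -/
  inductive StepT (P : Fm → Prop) : Tm → Tm → Prop
    | fn {f k} {a : Fin k → Tm} {j : Fin k} {t' : Tm} :
        StepT P (a j) t' → StepT P (.fn f k a) (.fn f k (Function.update a j t'))
    | eps {F F'} : StepF P F F' → StepT P (.eps F) (.eps F')
  /-- One rewrite step on formulas: replace one occurrence of a subformula
  `Qx. A` (with `P A`) by `A{x ↦ εx. ¬^Q A}`. -/
  inductive StepF (P : Fm → Prop) : Fm → Fm → Prop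
    | root {Q A} : P A → StepF P (mkQ Q A) (qeRedex Q A)
    | pred {p k} {a : Fin k → Tm} {j : Fin k} {t' : Tm} :
        StepT P (a j) t' → StepF P (.pred p k a) (.pred p k (Function.update a j t'))
    | not {F F'} : StepF P F F' → StepF P (.not F) (.not F')
    | orL {F F' G} : StepF P F F' → StepF P (.or F G) (.or F' G)
    | orR {F G G'} : StepF P G G' → StepF P (.or F G) (.or F G')
    | andL {F F' G} : StepF P F F' → StepF P (.and F G) (.and F' G)
    | andR {F G G'} : StepF P G G' → StepF P (.and F G) (.and F G')
    | impL {F F' G} : StepF P F F' → StepF P (.imp F G) (.imp F' G)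
    | impR {F G G'} : StepF P G G' → StepF P (.imp F G) (.imp F G')
    | ex {F F'} : StepF P F F' → StepF P (.ex F) (.ex F')
    | all {F F'} : StepF P F F' → StepF P (.all F) (.all F')
end

/-- The quantifier-elimination rewrite relation `→` on formulas. -/
def Step : Fm → Fm → Prop := StepF (fun _ => True)

/-- `→₀`: the steps rewriting a vacuous quantifier (bound variable not free in the body). -/
def Step0 : Fm → Fm → Prop := StepF (fun A => ¬ freeF 0 A)

/-- `→₁`: the steps rewriting a non-vacuous quantifier. -/
def Step1 : Fm → Fm → Prop := StepF (fun A => freeF 0 A)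

/-- `→ℐ`: the innermost steps, whose rewritten subformula `Qx. A` contains no
quantifier other than the outermost `Q`. -/
def StepI : Fm → Fm → Prop := StepF (fun A => qcF A = 0)


mutual
  /-- Parallel rewriting inside terms (finitely many pairwise disjoint redexes
  rewritten simultaneously); side condition `P` on the bodies of the rewritten
  quantifiers. -/
  inductive ParT (P : Fm → Prop) : Tm → Tm → Prop
    | var {i} : ParT P (.var i) (.var i)
    | fn {f k} {a b : Fin k → Tm} :
        (∀ i, ParT P (a i) (b i)) → ParT P (.fn f k a) (.fn f k b)
    | eps {F F'} : ParF P F F' → ParT P (.eps F) (.eps F')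
  /-- `⇉`: parallel rewriting on formulas, simultaneously replacing the
  subformulas at finitely many pairwise disjoint positions. -/
  inductive ParF (P : Fm → Prop) : Fm → Fm → Prop
    | root {Q A} : P A → ParF P (mkQ Q A) (qeRedex Q A)
    | pred {p k} {a b : Fin k → Tm} :
        (∀ i, ParT P (a i) (b i)) → ParF P (.pred p k a) (.pred p k b)
    | not {F F'} : ParF P F F' → ParF P (.not F) (.not F')
    | or {F F' G G'} : ParF P F F' → ParF P G G' → ParF P (.or F G) (.or F' G')
    | and {F F' G G'} : ParF P F F' → ParF P G G' → ParF P (.and F G) (.and F' G')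
    | imp {F F' G G'} : ParF P F F' → ParF P G G' → ParF P (.imp F G) (.imp F' G')
    | ex {F F'} : ParF P F F' → ParF P (.ex F) (.ex F')
    | all {F F'} : ParF P F F' → ParF P (.all F) (.all F')
end

/-- `⇉`: the parallel version of the rewrite relation `→`. -/
def Par : Fm → Fm → Prop := ParF (fun _ => True)

/-- `⇉₁`: parallel rewriting in which every replaced quantifier is non-vacuous. -/
def Par1 : Fm → Fm → Prop := ParF (fun A => freeF 0 A)

mutual
  /-- One-hole contexts whose overall shape is a term; the hole is a formula hole. -/
  inductive CtxT : Type
    | fn : ℕ → (k : ℕ) → (Fin k → Tm) → Fin k → CtxT → CtxT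
    | eps : CtxF → CtxT
  /-- One-hole contexts whose overall shape is a formula; the hole is a formula hole. -/
  inductive CtxF : Type
    | hole : CtxF
    | pred : ℕ → (k : ℕ) → (Fin k → Tm) → Fin k → CtxT → CtxF
    | not : CtxF → CtxF
    | orL : CtxF → Fm → CtxF
    | orR : Fm → CtxF → CtxF
    | andL : CtxF → Fm → CtxF
    | andR : Fm → CtxF → CtxF
    | impL : CtxF → Fm → CtxF
    | impR : Fm → CtxF → CtxF
    | ex : CtxF → CtxF
    | all : CtxF → CtxF
end

mutual
  /-- Filling the hole of a term-shaped context with a formula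
  (capture-permitting, as usual for contexts). -/
  def fillT : CtxT → Fm → Tm
    | .fn f k a j c, F => .fn f k (Function.update a j (fillT c F))
    | .eps c, F => .eps (fillF c F)
  /-- Filling the hole of a formula-shaped context with a formula. -/
  def fillF : CtxF → Fm → Fm
    | .hole, F => F
    | .pred p k a j c, F => .pred p k (Function.update a j (fillT c F))
    | .not c, F => .not (fillF c F)
    | .orL c G, F => .or (fillF c F) G
    | .orR G c, F => .or G (fillF c F)
    | .andL c G, F => .and (fillF c F) G
    | .andR G c, F => .and G (fillF c F)
    | .impL c G, F => .imp (fillF c F) G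
    | .impR G c, F => .imp G (fillF c F)
    | .ex c, F => .ex (fillF c F)
    | .all c, F => .all (fillF c F)
end

def inst1Sub (t : Tm) : ℕ → Tm
  | 0 => t
  | n + 1 => .var n

theorem inst1_eq_subF (F : Fm) (t : Tm) : inst1 F t = subF (inst1Sub t) F := rfl

theorem upRen_comp (r s : ℕ → ℕ) : upRen r ∘ upRen s = upRen (r ∘ s) := by
  funext n; cases n <;> rfl

mutual
theorem renT_renT (r s : ℕ → ℕ) : ∀ t : Tm, renT r (renT s t) = renT (r ∘ s) t
  | .var _ => rfl
  | .fn f k a => congrArg (Tm.fn f k) (funext fun i => renT_renT r s (a i))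
  | .eps F => congrArg Tm.eps (by rw [renF_renF, upRen_comp])
theorem renF_renF (r s : ℕ → ℕ) : ∀ F : Fm, renF r (renF s F) = renF (r ∘ s) F
  | .pred p k a => congrArg (Fm.pred p k) (funext fun i => renT_renT r s (a i))
  | .not F => congrArg Fm.not (renF_renF r s F)
  | .or F G => congrArg₂ Fm.or (renF_renF r s F) (renF_renF r s G)
  | .and F G => congrArg₂ Fm.and (renF_renF r s F) (renF_renF r s G)
  | .imp F G => congrArg₂ Fm.imp (renF_renF r s F) (renF_renF r s G)
  | .ex F => congrArg Fm.ex (by rw [renF_renF, upRen_comp])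
  | .all F => congrArg Fm.all (by rw [renF_renF, upRen_comp])
end

theorem upSub_comp_upRen (σ : ℕ → Tm) (r : ℕ → ℕ) : upSub σ ∘ upRen r = upSub (σ ∘ r) := by
  funext n; cases n <;> rfl

mutual
theorem subT_renT (σ : ℕ → Tm) (r : ℕ → ℕ) : ∀ t : Tm, subT σ (renT r t) = subT (σ ∘ r) t
  | .var _ => rfl
  | .fn f k a => congrArg (Tm.fn f k) (funext fun i => subT_renT σ r (a i))
  | .eps F => congrArg Tm.eps (by rw [subF_renF, upSub_comp_upRen])
theorem subF_renF (σ : ℕ → Tm) (r : ℕ → ℕ) : ∀ F : Fm, subF σ (renF r F) = subF (σ ∘ r) F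
  | .pred p k a => congrArg (Fm.pred p k) (funext fun i => subT_renT σ r (a i))
  | .not F => congrArg Fm.not (subF_renF σ r F)
  | .or F G => congrArg₂ Fm.or (subF_renF σ r F) (subF_renF σ r G)
  | .and F G => congrArg₂ Fm.and (subF_renF σ r F) (subF_renF σ r G)
  | .imp F G => congrArg₂ Fm.imp (subF_renF σ r F) (subF_renF σ r G)
  | .ex F => congrArg Fm.ex (by rw [subF_renF, upSub_comp_upRen])
  | .all F => congrArg Fm.all (by rw [subF_renF, upSub_comp_upRen])
end

theorem renT_upRen_comp_upSub (r : ℕ → ℕ) (σ : ℕ → Tm) :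
    renT (upRen r) ∘ upSub σ = upSub (renT r ∘ σ) := by
  funext n
  cases n with
  | zero => rfl
  | succ n =>
    show renT (upRen r) (renT Nat.succ (σ n)) = renT Nat.succ (renT r (σ n))
    rw [renT_renT, renT_renT]
    rfl

mutual
theorem renT_subT (r : ℕ → ℕ) (σ : ℕ → Tm) : ∀ t : Tm, renT r (subT σ t) = subT (renT r ∘ σ) t
  | .var _ => rfl
  | .fn f k a => congrArg (Tm.fn f k) (funext fun i => renT_subT r σ (a i))
  | .eps F => congrArg Tm.eps (by rw [renF_subF, renT_upRen_comp_upSub])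
theorem renF_subF (r : ℕ → ℕ) (σ : ℕ → Tm) : ∀ F : Fm, renF r (subF σ F) = subF (renT r ∘ σ) F
  | .pred p k a => congrArg (Fm.pred p k) (funext fun i => renT_subT r σ (a i))
  | .not F => congrArg Fm.not (renF_subF r σ F)
  | .or F G => congrArg₂ Fm.or (renF_subF r σ F) (renF_subF r σ G)
  | .and F G => congrArg₂ Fm.and (renF_subF r σ F) (renF_subF r σ G)
  | .imp F G => congrArg₂ Fm.imp (renF_subF r σ F) (renF_subF r σ G)
  | .ex F => congrArg Fm.ex (by rw [renF_subF, renT_upRen_comp_upSub])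
  | .all F => congrArg Fm.all (by rw [renF_subF, renT_upRen_comp_upSub])
end

theorem subT_upSub_comp_upSub (τ σ : ℕ → Tm) :
    subT (upSub τ) ∘ upSub σ = upSub (subT τ ∘ σ) := by
  funext n
  cases n with
  | zero => rfl
  | succ n => exact (subT_renT _ _ _).trans (renT_subT _ _ _).symm

mutual
theorem subT_subT (τ σ : ℕ → Tm) : ∀ t : Tm, subT τ (subT σ t) = subT (subT τ ∘ σ) t
  | .var _ => rfl
  | .fn f k a => congrArg (Tm.fn f k) (funext fun i => subT_subT τ σ (a i))
  | .eps F => congrArg Tm.eps (by rw [subF_subF, subT_upSub_comp_upSub])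
theorem subF_subF (τ σ : ℕ → Tm) : ∀ F : Fm, subF τ (subF σ F) = subF (subT τ ∘ σ) F
  | .pred p k a => congrArg (Fm.pred p k) (funext fun i => subT_subT τ σ (a i))
  | .not F => congrArg Fm.not (subF_subF τ σ F)
  | .or F G => congrArg₂ Fm.or (subF_subF τ σ F) (subF_subF τ σ G)
  | .and F G => congrArg₂ Fm.and (subF_subF τ σ F) (subF_subF τ σ G)
  | .imp F G => congrArg₂ Fm.imp (subF_subF τ σ F) (subF_subF τ σ G)
  | .ex F => congrArg Fm.ex (by rw [subF_subF, subT_upSub_comp_upSub])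
  | .all F => congrArg Fm.all (by rw [subF_subF, subT_upSub_comp_upSub])
end

theorem upSub_var : upSub Tm.var = Tm.var := by
  funext n; cases n <;> rfl

mutual
theorem subT_var : ∀ t : Tm, subT Tm.var t = t
  | .var _ => rfl
  | .fn f k a => congrArg (Tm.fn f k) (funext fun i => subT_var (a i))
  | .eps F => congrArg Tm.eps (by rw [upSub_var, subF_var])
theorem subF_var : ∀ F : Fm, subF Tm.var F = F
  | .pred p k a => congrArg (Fm.pred p k) (funext fun i => subT_var (a i))
  | .not F => congrArg Fm.not (subF_var F)
  | .or F G => congrArg₂ Fm.or (subF_var F) (subF_var G)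
  | .and F G => congrArg₂ Fm.and (subF_var F) (subF_var G)
  | .imp F G => congrArg₂ Fm.imp (subF_var F) (subF_var G)
  | .ex F => congrArg Fm.ex (by rw [upSub_var, subF_var])
  | .all F => congrArg Fm.all (by rw [upSub_var, subF_var])
end

theorem subF_mkQ (σ : ℕ → Tm) (Q : Quant) (A : Fm) :
    subF σ (mkQ Q A) = mkQ Q (subF (upSub σ) A) := by
  cases Q <;> rfl

theorem renF_mkQ (r : ℕ → ℕ) (Q : Quant) (A : Fm) :
    renF r (mkQ Q A) = mkQ Q (renF (upRen r) A) := by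
  cases Q <;> rfl

theorem subF_negQ (σ : ℕ → Tm) (Q : Quant) (A : Fm) :
    subF σ (negQ Q A) = negQ Q (subF σ A) := by
  cases Q <;> rfl

theorem renF_negQ (r : ℕ → ℕ) (Q : Quant) (A : Fm) :
    renF r (negQ Q A) = negQ Q (renF r A) := by
  cases Q <;> rfl

theorem subF_qeRedex (σ : ℕ → Tm) (Q : Quant) (A : Fm) :
    subF σ (qeRedex Q A) = qeRedex Q (subF (upSub σ) A) := by
  simp only [qeRedex, inst1_eq_subF, subF_subF]
  congr 1
  funext n
  cases n with
  | zero => exact congrArg Tm.eps (subF_negQ _ Q A)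
  | succ n =>
    show σ n = subT (inst1Sub _) (renT Nat.succ (σ n))
    rw [subT_renT]
    exact (subT_var _).symm

theorem renF_qeRedex (r : ℕ → ℕ) (Q : Quant) (A : Fm) :
    renF r (qeRedex Q A) = qeRedex Q (renF (upRen r) A) := by
  simp only [qeRedex, inst1_eq_subF, renF_subF, subF_renF]
  congr 1
  funext n
  cases n with
  | zero => exact congrArg Tm.eps (renF_negQ _ Q A)
  | succ n => rfl

theorem exists_upRen_eq_succ (r : ℕ → ℕ) (n : ℕ) (p : ℕ → Prop) :
    (∃ m, upRen r m = n + 1 ∧ p m) ↔ ∃ m, r m = n ∧ p (m + 1) := by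
  constructor
  · rintro ⟨_ | m, h, hp⟩
    · exact absurd h (Nat.succ_ne_zero n).symm
    · exact ⟨m, Nat.succ_injective h, hp⟩
  · rintro ⟨m, rfl, hp⟩
    exact ⟨m + 1, rfl, hp⟩

mutual
theorem freeT_renT (r : ℕ → ℕ) (n : ℕ) :
    ∀ t : Tm, freeT n (renT r t) ↔ ∃ m, r m = n ∧ freeT m t
  | .var i => ⟨fun h => ⟨i, h, rfl⟩, fun ⟨_, h, hm⟩ => hm ▸ h⟩
  | .fn f k a => by
      simp only [renT, freeT, fun i => freeT_renT r n (a i)]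
      exact ⟨fun ⟨i, m, hm, h⟩ => ⟨m, hm, i, h⟩, fun ⟨m, hm, i, h⟩ => ⟨i, m, hm, h⟩⟩
  | .eps F => by simp only [renT, freeT, freeF_renF _ _ F, exists_upRen_eq_succ]
theorem freeF_renF (r : ℕ → ℕ) (n : ℕ) :
    ∀ F : Fm, freeF n (renF r F) ↔ ∃ m, r m = n ∧ freeF m F
  | .pred p k a => by
      simp only [renF, freeF, fun i => freeT_renT r n (a i)]
      exact ⟨fun ⟨i, m, hm, h⟩ => ⟨m, hm, i, h⟩, fun ⟨m, hm, i, h⟩ => ⟨i, m, hm, h⟩⟩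
  | .not F => freeF_renF r n F
  | .or F G => by simp only [renF, freeF, freeF_renF r n F, freeF_renF r n G, and_or_left, exists_or]
  | .and F G => by simp only [renF, freeF, freeF_renF r n F, freeF_renF r n G, and_or_left, exists_or]
  | .imp F G => by simp only [renF, freeF, freeF_renF r n F, freeF_renF r n G, and_or_left, exists_or]
  | .ex F => by simp only [renF, freeF, freeF_renF _ _ F, exists_upRen_eq_succ]
  | .all F => by simp only [renF, freeF, freeF_renF _ _ F, exists_upRen_eq_succ]
end

theorem freeT_renT_succ (n : ℕ) (t : Tm) : freeT (n + 1) (renT Nat.succ t) ↔ freeT n t := by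
  simp [freeT_renT]

theorem exists_freeT_upSub (σ : ℕ → Tm) (n : ℕ) (p : ℕ → Prop) :
    (∃ m, p m ∧ freeT (n + 1) (upSub σ m)) ↔ ∃ m, p (m + 1) ∧ freeT n (σ m) := by
  constructor
  · rintro ⟨_ | m, hp, h⟩
    · exact absurd h (Nat.succ_ne_zero n).symm
    · exact ⟨m, hp, (freeT_renT_succ n _).mp h⟩
  · rintro ⟨m, hp, h⟩
    exact ⟨m + 1, hp, (freeT_renT_succ n _).mpr h⟩

mutual
theorem freeT_subT (σ : ℕ → Tm) (n : ℕ) :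
    ∀ t : Tm, freeT n (subT σ t) ↔ ∃ m, freeT m t ∧ freeT n (σ m)
  | .var i => ⟨fun h => ⟨i, rfl, h⟩, fun ⟨_, hm, h⟩ => hm ▸ h⟩
  | .fn f k a => by
      simp only [subT, freeT, fun i => freeT_subT σ n (a i)]
      exact ⟨fun ⟨i, m, hm, h⟩ => ⟨m, ⟨i, hm⟩, h⟩, fun ⟨m, ⟨i, hm⟩, h⟩ => ⟨i, m, hm, h⟩⟩
  | .eps F => by simp only [subT, freeT, freeF_subF _ _ F, exists_freeT_upSub]
theorem freeF_subF (σ : ℕ → Tm) (n : ℕ) :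
    ∀ F : Fm, freeF n (subF σ F) ↔ ∃ m, freeF m F ∧ freeT n (σ m)
  | .pred p k a => by
      simp only [subF, freeF, fun i => freeT_subT σ n (a i)]
      exact ⟨fun ⟨i, m, hm, h⟩ => ⟨m, ⟨i, hm⟩, h⟩, fun ⟨m, ⟨i, hm⟩, h⟩ => ⟨i, m, hm, h⟩⟩
  | .not F => freeF_subF σ n F
  | .or F G => by simp only [subF, freeF, freeF_subF σ n F, freeF_subF σ n G, or_and_right, exists_or]
  | .and F G => by simp only [subF, freeF, freeF_subF σ n F, freeF_subF σ n G, or_and_right, exists_or]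
  | .imp F G => by simp only [subF, freeF, freeF_subF σ n F, freeF_subF σ n G, or_and_right, exists_or]
  | .ex F => by simp only [subF, freeF, freeF_subF _ _ F, exists_freeT_upSub]
  | .all F => by simp only [subF, freeF, freeF_subF _ _ F, exists_freeT_upSub]
end

theorem freeF_negQ (Q : Quant) (A : Fm) (n : ℕ) : freeF n (negQ Q A) ↔ freeF n A := by
  cases Q <;> rfl

theorem freeF_mkQ (Q : Quant) (A : Fm) (n : ℕ) : freeF n (mkQ Q A) ↔ freeF (n + 1) A := by
  cases Q <;> rfl

theorem freeF_qeRedex (Q : Quant) (A : Fm) (n : ℕ) :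
    freeF n (qeRedex Q A) ↔ freeF (n + 1) A := by
  rw [qeRedex, inst1_eq_subF, freeF_subF]
  constructor
  · rintro ⟨_ | m, hA, h⟩
    · exact (freeF_negQ Q A (n + 1)).mp h
    · exact (show m = n from h) ▸ hA
  · exact fun h => ⟨n + 1, h, rfl⟩

theorem freeF_zero_subF_upSub (σ : ℕ → Tm) (A : Fm) (h : freeF 0 A) :
    freeF 0 (subF (upSub σ) A) :=
  (freeF_subF _ 0 A).mpr ⟨0, h, rfl⟩

theorem freeF_zero_renF_upRen (r : ℕ → ℕ) (A : Fm) (h : freeF 0 A) :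
    freeF 0 (renF (upRen r) A) :=
  (freeF_renF _ 0 A).mpr ⟨0, rfl, h⟩

section Rewriting

variable {P : Fm → Prop}

theorem StepT.fn_update {f k : ℕ} {a : Fin k → Tm} {j : Fin k} {t t' : Tm} (h : StepT P t t') :
    StepT P (.fn f k (Function.update a j t)) (.fn f k (Function.update a j t')) := by
  simpa using StepT.fn (a := Function.update a j t) (j := j) (by simpa using h)

theorem StepF.pred_update {p k : ℕ} {a : Fin k → Tm} {j : Fin k} {t t' : Tm}
    (h : StepT P t t') :
    StepF P (.pred p k (Function.update a j t)) (.pred p k (Function.update a j t')) := by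
  simpa using StepF.pred (a := Function.update a j t) (j := j) (by simpa using h)

mutual
theorem stepT_fillT {F F' : Fm} (h : StepF P F F') :
    ∀ c : CtxT, StepT P (fillT c F) (fillT c F')
  | .fn _ _ _ _ c => .fn_update (stepT_fillT h c)
  | .eps c => .eps (stepF_fillF h c)
theorem stepF_fillF {F F' : Fm} (h : StepF P F F') :
    ∀ c : CtxF, StepF P (fillF c F) (fillF c F')
  | .hole => h
  | .pred _ _ _ _ c => .pred_update (stepT_fillT h c)
  | .not c => .not (stepF_fillF h c)
  | .orL c _ => .orL (stepF_fillF h c)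
  | .orR _ c => .orR (stepF_fillF h c)
  | .andL c _ => .andL (stepF_fillF h c)
  | .andR _ c => .andR (stepF_fillF h c)
  | .impL c _ => .impL (stepF_fillF h c)
  | .impR _ c => .impR (stepF_fillF h c)
  | .ex c => .ex (stepF_fillF h c)
  | .all c => .all (stepF_fillF h c)
end

mutual
theorem stepT_subT (hP : ∀ σ A, P A → P (subF (upSub σ) A)) :
    ∀ {t t' : Tm}, StepT P t t' → ∀ σ : ℕ → Tm, StepT P (subT σ t) (subT σ t')
  | _, _, .fn h, σ => by
      simp only [subT, ← Function.comp_apply (f := subT σ), Function.comp_update]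
      exact .fn (stepT_subT hP h σ)
  | _, _, .eps h, σ => .eps (stepF_subF hP h (upSub σ))
theorem stepF_subF (hP : ∀ σ A, P A → P (subF (upSub σ) A)) :
    ∀ {F F' : Fm}, StepF P F F' → ∀ σ : ℕ → Tm, StepF P (subF σ F) (subF σ F')
  | _, _, .root (Q := Q) (A := A) hA, σ => by
      rw [subF_mkQ, subF_qeRedex]
      exact .root (hP σ A hA)
  | _, _, .pred h, σ => by
      simp only [subF, ← Function.comp_apply (f := subT σ), Function.comp_update]
      exact .pred (stepT_subT hP h σ)
  | _, _, .not h, σ => .not (stepF_subF hP h σ)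
  | _, _, .orL h, σ => .orL (stepF_subF hP h σ)
  | _, _, .orR h, σ => .orR (stepF_subF hP h σ)
  | _, _, .andL h, σ => .andL (stepF_subF hP h σ)
  | _, _, .andR h, σ => .andR (stepF_subF hP h σ)
  | _, _, .impL h, σ => .impL (stepF_subF hP h σ)
  | _, _, .impR h, σ => .impR (stepF_subF hP h σ)
  | _, _, .ex h, σ => .ex (stepF_subF hP h (upSub σ))
  | _, _, .all h, σ => .all (stepF_subF hP h (upSub σ))
end

theorem exists_freeT_update_iff {k n : ℕ} {a : Fin k → Tm} {j : Fin k} {t' : Tm}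
    (h : freeT n (a j) ↔ freeT n t') :
    (∃ i, freeT n (Function.update a j t' i)) ↔ ∃ i, freeT n (a i) := by
  refine exists_congr fun i => ?_
  rcases eq_or_ne i j with rfl | hij
  · rw [Function.update_self, h]
  · rw [Function.update_of_ne hij]

mutual
theorem freeT_iff_of_stepT : ∀ {t t' : Tm}, StepT P t t' → ∀ n, freeT n t ↔ freeT n t'
  | _, _, .fn h, n => (exists_freeT_update_iff (freeT_iff_of_stepT h n)).symm
  | _, _, .eps h, n => freeF_iff_of_stepF h (n + 1)
theorem freeF_iff_of_stepF : ∀ {F F' : Fm}, StepF P F F' → ∀ n, freeF n F ↔ freeF n F'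
  | _, _, .root _, n => (freeF_mkQ _ _ n).trans (freeF_qeRedex _ _ n).symm
  | _, _, .pred h, n => (exists_freeT_update_iff (freeT_iff_of_stepT h n)).symm
  | _, _, .not h, n => freeF_iff_of_stepF h n
  | _, _, .orL h, n => or_congr_left (freeF_iff_of_stepF h n)
  | _, _, .orR h, n => or_congr_right (freeF_iff_of_stepF h n)
  | _, _, .andL h, n => or_congr_left (freeF_iff_of_stepF h n)
  | _, _, .andR h, n => or_congr_right (freeF_iff_of_stepF h n)
  | _, _, .impL h, n => or_congr_left (freeF_iff_of_stepF h n)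
  | _, _, .impR h, n => or_congr_right (freeF_iff_of_stepF h n)
  | _, _, .ex h, n => freeF_iff_of_stepF h (n + 1)
  | _, _, .all h, n => freeF_iff_of_stepF h (n + 1)
end

mutual
theorem parT_refl : ∀ t : Tm, ParT P t t
  | .var _ => .var
  | .fn _ _ a => .fn fun i => parT_refl (a i)
  | .eps F => .eps (parF_refl F)
theorem parF_refl : ∀ F : Fm, ParF P F F
  | .pred _ _ a => .pred fun i => parT_refl (a i)
  | .not F => .not (parF_refl F)
  | .or F G => .or (parF_refl F) (parF_refl G)
  | .and F G => .and (parF_refl F) (parF_refl G)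
  | .imp F G => .imp (parF_refl F) (parF_refl G)
  | .ex F => .ex (parF_refl F)
  | .all F => .all (parF_refl F)
end

theorem parT_update {k : ℕ} {a : Fin k → Tm} {j : Fin k} {t' : Tm} (h : ParT P (a j) t') :
    ∀ i, ParT P (a i) (Function.update a j t' i) := by
  intro i
  rcases eq_or_ne i j with rfl | hij
  · rwa [Function.update_self]
  · rw [Function.update_of_ne hij]
    exact parT_refl (a i)

mutual
theorem StepT.parT : ∀ {t t' : Tm}, StepT P t t' → ParT P t t'
  | _, _, .fn h => .fn (parT_update h.parT)
  | _, _, .eps h => .eps h.parF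
theorem StepF.parF : ∀ {F F' : Fm}, StepF P F F' → ParF P F F'
  | _, _, .root hA => .root hA
  | _, _, .pred h => .pred (parT_update h.parT)
  | _, _, .not h => .not h.parF
  | _, _, .orL h => .or h.parF (parF_refl _)
  | _, _, .orR h => .or (parF_refl _) h.parF
  | _, _, .andL h => .and h.parF (parF_refl _)
  | _, _, .andR h => .and (parF_refl _) h.parF
  | _, _, .impL h => .imp h.parF (parF_refl _)
  | _, _, .impR h => .imp (parF_refl _) h.parF
  | _, _, .ex h => .ex h.parF
  | _, _, .all h => .all h.parF
end

theorem ParF.negQ (Q : Quant) {F F' : Fm} (h : ParF P F F') : ParF P (negQ Q F) (negQ Q F') := by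
  cases Q
  · exact h
  · exact .not h

mutual
theorem parT_renT (hP : ∀ r A, P A → P (renF (upRen r) A)) :
    ∀ {t t' : Tm}, ParT P t t' → ∀ r : ℕ → ℕ, ParT P (renT r t) (renT r t')
  | _, _, .var, _ => .var
  | _, _, .fn h, r => .fn fun i => parT_renT hP (h i) r
  | _, _, .eps h, r => .eps (parF_renF hP h (upRen r))
theorem parF_renF (hP : ∀ r A, P A → P (renF (upRen r) A)) :
    ∀ {F F' : Fm}, ParF P F F' → ∀ r : ℕ → ℕ, ParF P (renF r F) (renF r F')
  | _, _, .root (Q := Q) (A := A) hA, r => by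
      rw [renF_mkQ, renF_qeRedex]
      exact .root (hP r A hA)
  | _, _, .pred h, r => .pred fun i => parT_renT hP (h i) r
  | _, _, .not h, r => .not (parF_renF hP h r)
  | _, _, .or h g, r => .or (parF_renF hP h r) (parF_renF hP g r)
  | _, _, .and h g, r => .and (parF_renF hP h r) (parF_renF hP g r)
  | _, _, .imp h g, r => .imp (parF_renF hP h r) (parF_renF hP g r)
  | _, _, .ex h, r => .ex (parF_renF hP h (upRen r))
  | _, _, .all h, r => .all (parF_renF hP h (upRen r))
end

theorem parT_upSub (hP : ∀ r A, P A → P (renF (upRen r) A)) {σ σ' : ℕ → Tm}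
    (h : ∀ m, ParT P (σ m) (σ' m)) : ∀ m, ParT P (upSub σ m) (upSub σ' m)
  | 0 => .var
  | m + 1 => parT_renT hP (h m) Nat.succ

mutual
theorem parT_subT (hP : ∀ r A, P A → P (renF (upRen r) A)) :
    ∀ (t : Tm) {σ σ' : ℕ → Tm}, (∀ m, ParT P (σ m) (σ' m)) → ParT P (subT σ t) (subT σ' t)
  | .var i, _, _, h => h i
  | .fn _ _ a, _, _, h => .fn fun i => parT_subT hP (a i) h
  | .eps F, _, _, h => .eps (parF_subF hP F (parT_upSub hP h))
theorem parF_subF (hP : ∀ r A, P A → P (renF (upRen r) A)) :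
    ∀ (F : Fm) {σ σ' : ℕ → Tm}, (∀ m, ParT P (σ m) (σ' m)) → ParF P (subF σ F) (subF σ' F)
  | .pred _ _ a, _, _, h => .pred fun i => parT_subT hP (a i) h
  | .not F, _, _, h => .not (parF_subF hP F h)
  | .or F G, _, _, h => .or (parF_subF hP F h) (parF_subF hP G h)
  | .and F G, _, _, h => .and (parF_subF hP F h) (parF_subF hP G h)
  | .imp F G, _, _, h => .imp (parF_subF hP F h) (parF_subF hP G h)
  | .ex F, _, _, h => .ex (parF_subF hP F (parT_upSub hP h))
  | .all F, _, _, h => .all (parF_subF hP F (parT_upSub hP h))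
end

theorem parF_inst1 (hP : ∀ r A, P A → P (renF (upRen r) A)) (F : Fm) {t t' : Tm}
    (h : ParT P t t') : ParF P (inst1 F t) (inst1 F t') := by
  rw [inst1_eq_subF, inst1_eq_subF]
  refine parF_subF hP F fun m => ?_
  cases m
  · exact h
  · exact .var

end Rewriting

theorem upSub_congr {F : Fm} {σ σ' : ℕ → Tm} (h : ∀ m, freeF (m + 1) F → σ m = σ' m) :
    ∀ m, freeF m F → upSub σ m = upSub σ' m
  | 0, _ => rfl
  | m + 1, hm => congrArg (renT Nat.succ) (h m hm)

mutual
theorem subT_congr :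
    ∀ (t : Tm) {σ σ' : ℕ → Tm}, (∀ m, freeT m t → σ m = σ' m) → subT σ t = subT σ' t
  | .var i, _, _, h => h i rfl
  | .fn f k a, _, _, h =>
      congrArg (Tm.fn f k) (funext fun i => subT_congr (a i) fun m hm => h m ⟨i, hm⟩)
  | .eps F, _, _, h => congrArg Tm.eps (subF_congr F (upSub_congr h))
theorem subF_congr :
    ∀ (F : Fm) {σ σ' : ℕ → Tm}, (∀ m, freeF m F → σ m = σ' m) → subF σ F = subF σ' F
  | .pred p k a, _, _, h =>
      congrArg (Fm.pred p k) (funext fun i => subT_congr (a i) fun m hm => h m ⟨i, hm⟩)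
  | .not F, _, _, h => congrArg Fm.not (subF_congr F h)
  | .or F G, _, _, h => congrArg₂ Fm.or (subF_congr F fun m hm => h m (.inl hm))
      (subF_congr G fun m hm => h m (.inr hm))
  | .and F G, _, _, h => congrArg₂ Fm.and (subF_congr F fun m hm => h m (.inl hm))
      (subF_congr G fun m hm => h m (.inr hm))
  | .imp F G, _, _, h => congrArg₂ Fm.imp (subF_congr F fun m hm => h m (.inl hm))
      (subF_congr G fun m hm => h m (.inr hm))
  | .ex F, _, _, h => congrArg Fm.ex (subF_congr F (upSub_congr h))
  | .all F, _, _, h => congrArg Fm.all (subF_congr F (upSub_congr h))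
end

theorem inst1_congr_of_not_freeF {F : Fm} (hF : ¬ freeF 0 F) (t t' : Tm) :
    inst1 F t = inst1 F t' := by
  rw [inst1_eq_subF, inst1_eq_subF]
  refine subF_congr F fun m hm => ?_
  cases m
  · exact absurd hm hF
  · rfl

/-- the key local-divergence lemma.  In the de Bruijn
representation the side conditions of the paper — that `x₁` and `x₂` are
distinct and that `x₂` does not occur free in the context `G₁[·]` — hold
automatically (formulas are identified up to renaming of bound variables).
`F₀ = Q₁x₁. G₁[Q₂x₂. G₂]`; `F₁` results from rewriting the inner redex,
`F₂` from rewriting the outer, top-level redex.  Then suitable `F₃`, `F₄`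
exist with: (1) `F₁ → F₄`, `F₃ → F₄`, `F₂ ⇉ F₃`; (2) if `x₂` occurs free in
`G₂` then `F₃ →₁ F₄` and `F₂ ⇉₁ F₃`; (3) if `x₁` occurs free in
`G₁[Q₂x₂. G₂]` then `F₁ →₁ F₄`; (4) if `x₁` does not occur free in
`G₁[Q₂x₂. G₂]` then `F₃ = F₂`. -/
theorem stmt6 (Q₁ Q₂ : Quant) (C : CtxF) (G₂ : Fm) :
    ∃ F₃ F₄ : Fm,
      -- (1)
      (Step (mkQ Q₁ (fillF C (qeRedex Q₂ G₂))) F₄ ∧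
        Step F₃ F₄ ∧
        Par (qeRedex Q₁ (fillF C (mkQ Q₂ G₂))) F₃) ∧
      -- (2) inner step non-vacuous
      (freeF 0 G₂ →
        Step1 F₃ F₄ ∧ Par1 (qeRedex Q₁ (fillF C (mkQ Q₂ G₂))) F₃) ∧
      -- (3) outer step non-vacuous
      (freeF 0 (fillF C (mkQ Q₂ G₂)) →
        Step1 (mkQ Q₁ (fillF C (qeRedex Q₂ G₂))) F₄) ∧
      -- (4) outer step vacuous
      (¬ freeF 0 (fillF C (mkQ Q₂ G₂)) →
        F₃ = qeRedex Q₁ (fillF C (mkQ Q₂ G₂))) := by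
  set A := fillF C (mkQ Q₂ G₂)
  set A' := fillF C (qeRedex Q₂ G₂)
  have inner {P : Fm → Prop} (h : P G₂) : StepF P A A' := stepF_fillF (.root h) C
  have epsPar {P : Fm → Prop} (h : P G₂) :
      ParT P (.eps (negQ Q₁ A)) (.eps (negQ Q₁ A')) :=
    .eps ((inner h).parF.negQ Q₁)
  refine ⟨inst1 A (.eps (negQ Q₁ A')), qeRedex Q₁ A',
    ⟨.root trivial, ?_, ?_⟩, fun h₂ => ⟨?_, ?_⟩, fun h₁ => .root ?_, fun h₁ => ?_⟩
  · exact stepF_subF (fun _ _ _ => trivial) (inner trivial) _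
  · exact parF_inst1 (fun _ _ _ => trivial) A (epsPar trivial)
  · exact stepF_subF freeF_zero_subF_upSub (inner h₂) _
  · exact parF_inst1 freeF_zero_renF_upRen A (epsPar h₂)
  · exact (freeF_iff_of_stepF (inner (P := fun _ => True) trivial) 0).mp h₁
  · exact inst1_congr_of_not_freeF h₁ _ _
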